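/- For all integers m, n, r ≥ 0, (r+1)^{⟨m+n⟩} = Σ_{i=0}^{n} Σ_{j=0}^{m} m^{⟨n-i⟩} · C(n,i) · c^{(r)}(m,j) · (r+1)^{⟨i⟩}, where a^{⟨b⟩} denotes the rising factorial and C(n,i) is the binomial coefficient. -/

import Mathlib

open Finset

/-- Rising factorial: a^{⟨b⟩} = a(a+1)⋯(a+b-1). -/
def rise (a b : ℕ) : ℕ := ∏ ℓ ∈ range b, (a + ℓ)

/-- (Signless) Stirling numbers of the first kind. -/
def stirling1 : ℕ → ℕ → ℕ
  | 0, 0 => 1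
  | 0, _ + 1 => 0
  | _ + 1, 0 => 0
  | n + 1, k + 1 => stirling1 n k + n * stirling1 n (k + 1)

/-- r-Stirling numbers of the first kind. -/
def rStirling1 (r n k : ℕ) : ℕ :=
  ∑ i ∈ range (n + 1), rise r (n - i) * n.choose i * stirling1 i k

/-!
Split `(r+1)^⟨m+n⟩ = (r+1)^⟨m⟩ (r+1+m)^⟨n⟩` and expand the second factor by the Chu–Vandermonde
identity for rising factorials. The remaining factor `(r+1)^⟨m⟩` is the row sum of the
`r`-Stirling numbers: the `c(i,k)` are the coefficients of the Pochhammer polynomial `x^⟨i⟩`, so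
their row sum is `1^⟨i⟩`, and Vandermonde once more gives `Σ_i C(m,i) r^⟨m-i⟩ 1^⟨i⟩ = (r+1)^⟨m⟩`.
-/

open Polynomial

lemma rise_eq_ascFactorial (a b : ℕ) : rise a b = a.ascFactorial b := by
  induction b with
  | zero => rfl
  | succ b ih => rw [rise, prod_range_succ, ← rise, ih, Nat.ascFactorial_succ, mul_comm]

lemma rise_succ (a n : ℕ) : rise a (n + 1) = rise a n * (a + n) :=
  prod_range_succ _ _

lemma rise_mul_rise (a m n : ℕ) : rise a m * rise (a + m) n = rise a (m + n) := by
  simp only [rise_eq_ascFactorial, Nat.ascFactorial_mul_ascFactorial]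

lemma rise_add_eq_sum_antidiagonal (a b n : ℕ) :
    rise (a + b) n = ∑ ij ∈ antidiagonal n, n.choose ij.1 * (rise a ij.1 * rise b ij.2) := by
  induction n with
  | zero => simp [rise]
  | succ n ih =>
    have pascal := sum_antidiagonal_choose_succ_nsmul (fun i j => rise a i * rise b j) n
    simp only [smul_eq_mul] at pascal
    rw [pascal, rise_succ, ih, sum_mul, ← sum_add_distrib]
    refine sum_congr rfl fun ij hij => ?_
    rw [HasAntidiagonal.mem_antidiagonal] at hij
    rw [← Nat.choose_symm_of_eq_add hij.symm, rise_succ, rise_succ, ← hij]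
    ring

lemma rise_add_eq_sum_range (a b n : ℕ) :
    rise (a + b) n = ∑ i ∈ range (n + 1), n.choose i * rise a i * rise b (n - i) := by
  rw [rise_add_eq_sum_antidiagonal, Nat.sum_antidiagonal_eq_sum_range_succ_mk]
  simp only [mul_assoc]

lemma coeff_ascPochhammer_nat (n k : ℕ) : (ascPochhammer ℕ n).coeff k = stirling1 n k := by
  induction n generalizing k with
  | zero => cases k <;> simp [stirling1, coeff_one]
  | succ n ih =>
    cases k with
    | zero => simp [coeff_zero_eq_eval_zero, stirling1]
    | succ k => simp [ascPochhammer_succ_right, mul_add, coeff_mul_X, ih, stirling1, mul_comm]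

lemma sum_stirling1_mul_pow {n N : ℕ} (hN : n < N) (x : ℕ) :
    ∑ k ∈ range N, stirling1 n k * x ^ k = rise x n := by
  rw [rise_eq_ascFactorial, ← ascPochhammer_nat_eq_ascFactorial,
    eval_eq_sum_range' (by rwa [ascPochhammer_natDegree])]
  simp only [coeff_ascPochhammer_nat]

lemma sum_stirling1 {n N : ℕ} (hN : n < N) : ∑ k ∈ range N, stirling1 n k = rise 1 n := by
  simpa using sum_stirling1_mul_pow hN 1

lemma sum_rStirling1 (r : ℕ) {n N : ℕ} (hN : n < N) :
    ∑ k ∈ range N, rStirling1 r n k = rise (r + 1) n := by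
  simp only [rStirling1]
  rw [sum_comm, add_comm r 1, rise_add_eq_sum_range]
  refine sum_congr rfl fun i hi => ?_
  rw [← mul_sum, sum_stirling1 (by simp at hi; omega)]
  ring

theorem rise_add (m n r : ℕ) :
    rise (r + 1) (m + n) =
      ∑ i ∈ range (n + 1), ∑ j ∈ range (m + 1),
        rise m (n - i) * n.choose i * rStirling1 r m j * rise (r + 1) i := by
  simp only [← mul_sum, ← sum_mul, sum_rStirling1 r (Nat.lt_succ_self m)]
  rw [← rise_mul_rise, rise_add_eq_sum_range (r + 1) m n, mul_sum]
  refine sum_congr rfl fun i _ => ?_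
  ring
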